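/- arXiv:2303.12979 — 5 statements merged into one kernel-verified Lean document; each statement's English description precedes it below -/
import Mathlib

section
/- For even d ≥ 2 and k ≥ 1, the k-Toffoli permutation on (Fin d)^{k+1} cannot be written as a composition of permutations each of which is either a single-qudit transposition applied to one coordinate or a |0⟩-controlled X_{01} applied to a (control, target) pair of coordinates, provided k + 1 ≥ 3. (I.e., one borrowed ancilla is necessary: the gate set generates only even permutations while k-Toffoli is odd.) -/
/-!
Each gate acts on a target coordinate `m` by a permutation `u (x c)` of `Fin d` that depends
only on one other coordinate `c` (constantly, for a plain transposition). Its sign is the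
product of the signs of `u (x c)` over all values of the non-target coordinates, that is
`(∏ a, sign (u a)) ^ d ^ (k - 1)`; since `k + 1 ≥ 3` and `d` is even, the exponent is even,
so every gate is an even permutation. The `k`-Toffoli is a single transposition, hence odd.
-/

open Equiv Equiv.Perm

theorem prod_apply_eval_eq_pow {κ α M : Type*} [Fintype κ] [DecidableEq κ] [Fintype α]
    [CommMonoid M] (c : κ) (f : α → M) :
    ∏ g : κ → α, f (g c) = (∏ a, f a) ^ Fintype.card ({ j // j ≠ c } → α) := by
  rw [← Fintype.prod_equiv (funSplitAt c α).symm (fun p => f p.1) _ (fun _ => by simp),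
    Fintype.prod_prod_type, ← Finset.prod_pow]
  simp

section

variable {ι α : Type*} [Fintype ι] [DecidableEq ι] [Fintype α] [DecidableEq α]

theorem sign_eq_prod_of_apply_eq_update (m : ι) (t : ({ j // j ≠ m } → α) → Perm α)
    (σ : Perm (ι → α)) (hσ : ∀ x, σ x = Function.update x m (t (fun j => x j) (x m))) :
    sign σ = ∏ g, sign (t g) := by
  have : σ = (funSplitAt m α).symm.permCongr (prodCongrLeft t) := by
    ext x a
    rw [hσ x]
    by_cases h : a = m
    · subst h; simp
    · simp [Function.update, h]
  rw [this, sign_permCongr, sign_prodCongrLeft]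

theorem sign_eq_one_of_apply_eq_update_of_ne (hι : 3 ≤ Fintype.card ι)
    (hα : Even (Fintype.card α)) {c m : ι} (hcm : c ≠ m) (u : α → Perm α) (σ : Perm (ι → α))
    (hσ : ∀ x, σ x = Function.update x m (u (x c) (x m))) : sign σ = 1 := by
  rw [sign_eq_prod_of_apply_eq_update m (fun g => u (g ⟨c, hcm⟩)) σ hσ,
    prod_apply_eval_eq_pow (κ := { j // j ≠ m }) ⟨c, hcm⟩ (fun a => sign (u a)),
    Fintype.card_fun, Int.units_pow_eq_pow_mod_two, Nat.even_iff.mp (hα.pow_of_ne_zero ?_),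
    pow_zero]
  simp only [ne_eq, Fintype.card_subtype_compl, Fintype.card_unique]
  omega

end

/-- For even `d ≥ 2` and `k ≥ 2` (so `k + 1 ≥ 3` qudits), the `k`-Toffoli permutation
of `(Fin d)^(k+1)` is not a composition of G-gates, where a G-gate is either a
single-qudit transposition applied to one coordinate, or a `|0⟩`-controlled `X₀₁`
applied to a (control, target) pair of distinct coordinates. -/
theorem stmt_10 (d k : ℕ) (hd : 2 ≤ d) (heven : Even d) (hk : 2 ≤ k) :
    ¬ ∃ l : List (Equiv.Perm (Fin (k + 1) → Fin d)),
      (∀ σ ∈ l,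
        (∃ (m : Fin (k + 1)) (i j : Fin d), i ≠ j ∧
          ∀ x : Fin (k + 1) → Fin d,
            σ x = Function.update x m (Equiv.swap i j (x m))) ∨
        (∃ c m : Fin (k + 1), c ≠ m ∧
          ∀ x : Fin (k + 1) → Fin d,
            σ x =
              if x c = (⟨0, by omega⟩ : Fin d) then
                Function.update x m
                  (Equiv.swap (⟨0, by omega⟩ : Fin d) (⟨1, by omega⟩ : Fin d) (x m))
              else x)) ∧
      l.prod =
        Equiv.swap
          (fun _ : Fin (k + 1) => (⟨0, by omega⟩ : Fin d))
          (fun i : Fin (k + 1) =>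
            if i = Fin.last k then (⟨1, by omega⟩ : Fin d) else (⟨0, by omega⟩ : Fin d)) := by
  rintro ⟨l, hgates, hprod⟩
  have hn : 3 ≤ Fintype.card (Fin (k + 1)) := by rw [Fintype.card_fin]; omega
  have hd' : Even (Fintype.card (Fin d)) := by simpa using heven
  have hgate_even : ∀ σ ∈ l, sign σ = 1 := by
    intro σ hσ
    rcases hgates σ hσ with ⟨m, i, j, -, h⟩ | ⟨c, m, hcm, h⟩
    · have : Nontrivial (Fin (k + 1)) := Fintype.one_lt_card_iff_nontrivial.mp (by omega)
      obtain ⟨c, hcm⟩ := exists_ne m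
      exact sign_eq_one_of_apply_eq_update_of_ne hn hd' hcm (fun _ => swap i j) σ h
    · refine sign_eq_one_of_apply_eq_update_of_ne hn hd' hcm
        (fun a => if a = ⟨0, by omega⟩ then swap ⟨0, by omega⟩ ⟨1, by omega⟩ else 1) σ
        (fun x => ?_)
      rw [h x]
      split_ifs <;> simp
  have hprod_even : sign l.prod = 1 := by
    rw [map_list_prod]
    exact List.prod_eq_one (by simpa using hgate_even)
  have hne : (fun _ : Fin (k + 1) => (⟨0, by omega⟩ : Fin d)) ≠
      fun i => if i = Fin.last k then ⟨1, by omega⟩ else ⟨0, by omega⟩ :=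
    fun h => by simpa using congrFun h (Fin.last k)
  rw [hprod, sign_swap hne] at hprod_even
  exact absurd hprod_even (by decide)
end

section
/- For odd d ≥ 3, the 2-Toffoli identity holds: for all x₁, x₂, t ∈ Fin d, the composition (|0⟩₁-X_{01} on t) ∘ (|0⟩₁-X_{+1} on x₂) ∘ (|e⟩₂-X_{01} on t) ∘ (|0⟩₁-X_{−1} on x₂) ∘ (|e⟩₂-X_{01} on t), read right to left as in the circuit of Fig. 5, maps (x₁,x₂,t) to (x₁,x₂,X_{01}(t)) if x₁=x₂=0 and to (x₁,x₂,t) otherwise. -/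
/-!
The two `|e⟩₂`-controlled swaps of `t` cancel unless exactly one of their controls is a nonzero
even residue. If `x₁ ≠ 0` both see `x₂` and cancel. If `x₁ = 0` they see `x₂ + 1` and `x₂`, and for
odd `d` exactly one of these is nonzero even precisely when `x₂ ≠ 0`; so the swap of the first gate
is undone exactly when `x₂ ≠ 0`.
-/

theorem Function.Involutive.ite_apply_ite {α : Type*} {f : α → α} (hf : Function.Involutive f)
    (p q : Prop) [Decidable p] [Decidable q] (x : α) :
    (if p then f (if q then f x else x) else if q then f x else x) =
      if (p ↔ q) then x else f x := by
  by_cases hp : p <;> by_cases hq : q <;> simp [hp, hq, hf x]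

-- The wrap-around `d - 1 ↦ 0` keeps the alternation because `d - 1` is even.
theorem nonzero_even_iff_nonzero_even_succ_mod_iff {d : ℕ} (hodd : Odd d) (v w : ℕ) (hv : v < d)
    (hw : w = (v + 1) % d) :
    ((v ≠ 0 ∧ v % 2 = 0) ↔ (w ≠ 0 ∧ w % 2 = 0)) ↔ v = 0 := by
  obtain ⟨k, rfl⟩ := hodd
  rcases Nat.lt_or_ge (v + 1) (2 * k + 1) with hlt | hge
  · rw [Nat.mod_eq_of_lt hlt] at hw
    omega
  · rw [show v + 1 = 2 * k + 1 by omega, Nat.mod_self] at hw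
    omega

/-- The 2-Toffoli identity for odd `d ≥ 3` (circuit of Fig. 5): the composition
`(|e⟩₂-X₀₁ on t) ∘ (|0⟩₁-X₋₁ on x₂) ∘ (|e⟩₂-X₀₁ on t) ∘ (|0⟩₁-X₊₁ on x₂) ∘ (|0⟩₁-X₀₁ on t)`
(read right to left, i.e. applying first `|0⟩₁-X₀₁`, then `|0⟩₁-X₊₁`, then `|e⟩₂-X₀₁`,
then `|0⟩₁-X₋₁`, then `|e⟩₂-X₀₁`, exactly as in the circuit of Fig. 5) maps
`(x₁, x₂, t)` to `(x₁, x₂, X₀₁ t)` if `x₁ = x₂ = 0` and to `(x₁, x₂, t)` otherwise. -/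
theorem stmt_11 (d : ℕ) (hd : 3 ≤ d) (hodd : Odd d) (x₁ x₂ t : Fin d) :
    let z : Fin d := ⟨0, by omega⟩
    let o : Fin d := ⟨1, by omega⟩
    let sw : Fin d → Fin d := Equiv.swap z o
    let e : Fin d → Prop := fun v => (v : ℕ) ≠ 0 ∧ (v : ℕ) % 2 = 0
    -- gate 1: |0⟩₁-X₀₁ on t
    let t1 : Fin d := if x₁ = z then sw t else t
    -- gate 2: |0⟩₁-X₊₁ on x₂
    let x₂1 : Fin d := if x₁ = z then x₂ + o else x₂
    -- gate 3: |e⟩₂-X₀₁ on t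
    let t2 : Fin d := if e x₂1 then sw t1 else t1
    -- gate 4: |0⟩₁-X₋₁ on x₂
    let x₂2 : Fin d := if x₁ = z then x₂1 - o else x₂1
    -- gate 5: |e⟩₂-X₀₁ on t
    let t3 : Fin d := if e x₂2 then sw t2 else t2
    x₂2 = x₂ ∧ t3 = (if x₁ = z ∧ x₂ = z then sw t else t) := by
  intro z o sw e t1 x₂1 t2 x₂2 t3
  have hsw : Function.Involutive sw := Equiv.swap_apply_self z o
  by_cases h1 : x₁ = z
  · have hcontrols : (e x₂ ↔ e (x₂ + o)) ↔ x₂ = z := by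
      rw [Fin.ext_iff]
      exact nonzero_even_iff_nonzero_even_succ_mod_iff hodd _ _ x₂.isLt (by simp [Fin.val_add, o])
    have : NeZero d := ⟨by omega⟩
    have hx₂ : x₂ + o - o = x₂ := add_sub_cancel_right x₂ o
    simp only [t3, t2, t1, x₂2, x₂1, if_pos h1, hx₂, hsw.ite_apply_ite, hcontrols, hsw t,
      and_iff_right h1, and_self]
  · simp only [t3, t2, t1, x₂2, x₂1, h1, if_false, hsw.ite_apply_ite, iff_self, if_true,
      false_and, and_self]
end

section
/- For odd d ≥ 3 and k ≥ 2, the permutation P_k restricted to tuples with fixed first k−1 coordinates acts on the last coordinate as either the identity or the d-cycle x ↦ x−1 mod d; consequently P_k is an even permutation of (Fin d)^k when the number of tuples on which it acts as the shift is even, and in general sign(P_k) = (−1)^{(d−1)·M} where M is the number of prefixes (x₁,…,x_{k−1}) with i*=⊥ or x_{i*} even. -/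
/-! The permutation `P` moves only the last coordinate, subtracting a constant (`0` or `1`) that
depends on the prefix alone. Hence `P ^ d = 1`, and since `d` is odd,
`sign P = (sign P) ^ d = sign (P ^ d) = 1`. The right-hand side is `1` as well, because `d - 1`
is even. -/

open Function Equiv

theorem Equiv.Perm.sign_eq_one_of_pow_eq_one_of_odd {α : Type*} [DecidableEq α] [Fintype α]
    {σ : Perm α} {n : ℕ} (hn : Odd n) (h : σ ^ n = 1) : Perm.sign σ = 1 := by
  rw [← pow_one (Perm.sign σ), ← Nat.odd_iff.mp hn, ← Int.units_pow_eq_pow_mod_two, ← map_pow, h,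
    map_one]

section UpdateSub

variable {ι G : Type*} [DecidableEq ι] [AddCommGroup G] {L : ι} {shift : (ι → G) → G}
  {P : Perm (ι → G)}

theorem pow_apply_eq_update_sub_nsmul (hshift : ∀ x a, shift (update x L a) = shift x)
    (hP : ∀ x, P x = update x L (x L - shift x)) (n : ℕ) (x : ι → G) :
    (P ^ n) x = update x L (x L - n • shift x) := by
  induction n with
  | zero => simp
  | succ n ih =>
    rw [pow_succ', Perm.mul_apply, ih, hP, hshift, update_idem, update_self, sub_sub, succ_nsmul]

theorem pow_card_eq_one_of_eq_update_sub [Fintype G]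
    (hshift : ∀ x a, shift (update x L a) = shift x)
    (hP : ∀ x, P x = update x L (x L - shift x)) : P ^ Fintype.card G = 1 := by
  ext1 x
  rw [pow_apply_eq_update_sub_nsmul hshift hP, card_nsmul_eq_zero, sub_zero, update_eq_self,
    Perm.one_apply]

end UpdateSub

/-- For odd `d ≥ 3` and `k ≥ 2`, the permutation `P_k` acts on the last coordinate,
for each fixed prefix, as either the identity or the `d`-cycle `x ↦ x - 1 (mod d)`;
and `sign(P_k) = (-1)^((d-1) · M)`, where `M` is the number of prefixes
`(x₁, …, x_{k-1})` for which `i* = ⊥` or `x_{i*}` is even. -/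
theorem stmt_14 (d k : ℕ) (hd : 3 ≤ d) (hodd : Odd d) (hk : 2 ≤ k)
    (P : Equiv.Perm (Fin k → Fin d))
    (hP : ∀ x : Fin k → Fin d,
      P x =
        Function.update x ⟨k - 1, by omega⟩
          (if ∃ i : Fin k, (i : ℕ) < k - 1 ∧ x i ≠ (⟨0, by omega⟩ : Fin d) ∧
                (∀ j : Fin k, (i : ℕ) < (j : ℕ) → (j : ℕ) < k - 1 →
                  x j = (⟨0, by omega⟩ : Fin d)) ∧
                ((x i : ℕ)) % 2 = 1
           then x ⟨k - 1, by omega⟩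
           else x ⟨k - 1, by omega⟩ - (⟨1, by omega⟩ : Fin d))) :
    (∀ x : Fin k → Fin d,
      P x ⟨k - 1, by omega⟩ = x ⟨k - 1, by omega⟩ ∨
      P x ⟨k - 1, by omega⟩ = x ⟨k - 1, by omega⟩ - (⟨1, by omega⟩ : Fin d)) ∧
    Equiv.Perm.sign P =
      (-1) ^ ((d - 1) *
        (Finset.univ.filter (fun y : Fin k → Fin d =>
          y ⟨k - 1, by omega⟩ = (⟨0, by omega⟩ : Fin d) ∧
          ¬ ∃ i : Fin k, (i : ℕ) < k - 1 ∧ y i ≠ (⟨0, by omega⟩ : Fin d) ∧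
              (∀ j : Fin k, (i : ℕ) < (j : ℕ) → (j : ℕ) < k - 1 →
                y j = (⟨0, by omega⟩ : Fin d)) ∧
              ((y i : ℕ)) % 2 = 1)).card) := by
  have : NeZero d := ⟨by omega⟩
  set L : Fin k := ⟨k - 1, by omega⟩
  set C : (Fin k → Fin d) → Prop := fun x => ∃ i : Fin k, (i : ℕ) < k - 1 ∧ x i ≠ ⟨0, by omega⟩ ∧
    (∀ j : Fin k, (i : ℕ) < (j : ℕ) → (j : ℕ) < k - 1 → x j = ⟨0, by omega⟩) ∧ (x i : ℕ) % 2 = 1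
  set shift : (Fin k → Fin d) → Fin d := fun x => if C x then 0 else ⟨1, by omega⟩
  have hshift : ∀ x a, shift (update x L a) = shift x := by
    intro x a
    have hx : ∀ i : Fin k, (i : ℕ) < k - 1 → update x L a i = x i := fun i hi =>
      update_of_ne (Fin.ne_of_val_ne hi.ne) _ _
    have hC : C (update x L a) ↔ C x :=
      exists_congr fun i => and_congr_right fun hi => by simp +contextual only [hx, hi]
    simp only [shift, hC]
  have hP' : ∀ x, P x = update x L (x L - shift x) := fun x => by
    by_cases h : C x
    · rw [hP x, if_pos h]
      simp [shift, h]
    · rw [hP x, if_neg h]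
      simp [shift, h]
  have hsign : Perm.sign P = 1 := by
    refine Perm.sign_eq_one_of_pow_eq_one_of_odd hodd ?_
    simpa only [Fintype.card_fin] using pow_card_eq_one_of_eq_update_sub hshift hP'
  refine ⟨fun x => ?_, ?_⟩
  · rw [hP', update_self]
    by_cases h : C x <;> simp [shift, h]
  · rw [hsign, Even.neg_one_pow ((Nat.Odd.sub_odd hodd odd_one).mul_right _)]
end

section
/- Correctness of the 2-cycle circuit (Fig. 11): for a ≠ b in (Fin d)^n with a_n ≠ b_n, the composition S₁ ∘ S₂ ∘ S₁ (where S₁ applies X_{a_i b_i} to coordinate i for each i<n whenever x_n = b_n, and S₂ applies X_{a_n b_n} to coordinate n whenever (x₁,…,x_{n−1}) = (a₁,…,a_{n−1})) equals the transposition of a and b on (Fin d)^n. -/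
/-!
Write `c` for `a` with its last coordinate replaced by `b_n`. The gate `S₂` is exactly the
transposition `(a c)`, and `S₁` is an involution fixing `a` (as `a_n ≠ b_n`) and sending `c` to
`b`. Hence `S₁ ∘ S₂ ∘ S₁` is the conjugate of `(a c)` by `S₁`, i.e. the transposition
`(S₁ a  S₁ c) = (a b)`.
-/

open Equiv

section ControlledGates

variable {ι α : Type*} [DecidableEq ι] [DecidableEq α]

/-- The gate `S₁`: controlled on `x l = b l`, it applies `X_{a_i b_i}` at every `i ≠ l`. -/
def controlledSwapOff (a b : ι → α) (l : ι) (x : ι → α) : ι → α :=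
  if x l = b l then fun i => if i ≠ l then swap (a i) (b i) (x i) else x i else x

theorem controlledSwapOff_of_eq {a b x : ι → α} {l : ι} (hx : x l = b l) :
    controlledSwapOff a b l x = fun i => if i ≠ l then swap (a i) (b i) (x i) else x i :=
  if_pos hx

theorem controlledSwapOff_of_ne {a b x : ι → α} {l : ι} (hx : x l ≠ b l) :
    controlledSwapOff a b l x = x :=
  if_neg hx

theorem controlledSwapOff_apply_self (a b : ι → α) (l : ι) (x : ι → α) :
    controlledSwapOff a b l x l = x l := by
  by_cases hx : x l = b l
  · simp [controlledSwapOff_of_eq hx]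
  · rw [controlledSwapOff_of_ne hx]

theorem controlledSwapOff_involutive (a b : ι → α) (l : ι) :
    Function.Involutive (controlledSwapOff a b l) := by
  intro x
  by_cases hx : x l = b l
  · have hl := (controlledSwapOff_apply_self a b l x).trans hx
    rw [controlledSwapOff_of_eq hl, controlledSwapOff_of_eq hx]
    funext i
    by_cases hi : i = l <;> simp [hi]
  · rw [controlledSwapOff_of_ne hx, controlledSwapOff_of_ne hx]

theorem controlledSwapOff_update (a b : ι → α) (l : ι) :
    controlledSwapOff a b l (Function.update a l (b l)) = b := by
  rw [controlledSwapOff_of_eq (by simp)]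
  funext i
  by_cases hi : i = l <;> simp [hi]

/-- The left-hand side is the gate `S₂` for `y = a` and `t = b l`. -/
theorem ite_update_swap_eq_swap_update [DecidableEq (ι → α)] (y x : ι → α) (l : ι) (t : α)
    [Decidable (∀ i, i ≠ l → x i = y i)] :
    (if ∀ i, i ≠ l → x i = y i then Function.update x l (swap (y l) t (x l)) else x) =
      swap y (Function.update y l t) x := by
  split_ifs with hx
  · obtain ⟨s, rfl⟩ : ∃ s, x = Function.update y l s :=
      ⟨x l, funext fun i => by by_cases hi : i = l <;> simp_all⟩
    simp only [Function.update_self, Function.update_idem]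
    by_cases hy : s = y l
    · simp [hy]
    by_cases ht : s = t
    · simp [ht]
    rw [swap_apply_of_ne_of_ne hy ht, swap_apply_of_ne_of_ne]
    · exact fun h => hy (by simpa using congrFun h l)
    · exact fun h => ht (by simpa using congrFun h l)
  · have hy : x ≠ y := fun h => hx fun i _ => congrFun h i
    have ht : x ≠ Function.update y l t := fun h => hx fun i hi => by simp [h, hi]
    rw [swap_apply_of_ne_of_ne hy ht]

end ControlledGates

theorem Function.Involutive.apply_swap_apply {α : Type*} [DecidableEq α] {f : α → α}
    (hf : Function.Involutive f) (a b x : α) : f (Equiv.swap a b (f x)) = Equiv.swap (f a) (f b) x :=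
  congrFun (congrArg DFunLike.coe (symm_trans_swap_trans a b (hf.toPerm f))) x

theorem Fin.val_lt_sub_one_iff_ne {n : ℕ} (h : n - 1 < n) (i : Fin n) :
    (i : ℕ) < n - 1 ↔ i ≠ ⟨n - 1, h⟩ := by
  simp only [Ne, Fin.ext_iff]
  omega

/-- Correctness of the 2-cycle circuit (Fig. 11): for `a ≠ b` in `(Fin d)^n` with
`a_n ≠ b_n`, the composition `S₁ ∘ S₂ ∘ S₁` — where `S₁` applies `X_{a_i b_i}` to each
coordinate `i < n-1` (0-based) whenever `x_n = b_n`, and `S₂` applies `X_{a_n b_n}` to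
the last coordinate whenever the first `n-1` coordinates equal those of `a` — is the
transposition of `a` and `b`. -/
theorem stmt_17 (d n : ℕ) (hn : 2 ≤ n) (a b : Fin n → Fin d)
    (hlast : a ⟨n - 1, by omega⟩ ≠ b ⟨n - 1, by omega⟩) :
    let last : Fin n := ⟨n - 1, by omega⟩
    let S₁ : (Fin n → Fin d) → (Fin n → Fin d) := fun x =>
      if x last = b last then
        (fun i => if (i : ℕ) < n - 1 then Equiv.swap (a i) (b i) (x i) else x i)
      else x
    let S₂ : (Fin n → Fin d) → (Fin n → Fin d) := fun x =>
      if ∀ i : Fin n, (i : ℕ) < n - 1 → x i = a i then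
        Function.update x last (Equiv.swap (a last) (b last) (x last))
      else x
    ∀ x : Fin n → Fin d, S₁ (S₂ (S₁ x)) = Equiv.swap a b x := by
  intro last S₁ S₂ x
  have hS₁ : S₁ = controlledSwapOff a b last := by
    funext y
    simp only [S₁, controlledSwapOff, Fin.val_lt_sub_one_iff_ne (by omega : n - 1 < n)]
    rfl
  have hS₂ : S₂ = swap a (Function.update a last (b last)) := by
    funext y
    simp only [S₂, Fin.val_lt_sub_one_iff_ne (by omega : n - 1 < n)]
    exact ite_update_swap_eq_swap_update a y last (b last)
  rw [hS₁, hS₂, (controlledSwapOff_involutive a b last).apply_swap_apply,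
    controlledSwapOff_of_ne hlast, controlledSwapOff_update]
end

section
/- Counting lower bound: for d ≥ 2 and constant c ≥ 1, if every circuit over cn qudits is built from single-qudit transposition gates and two-qudit |0⟩-controlled X_{01} gates (at most cn(cn−1) + cn·d(d−1)/2 distinct gates), then any N satisfying (number of circuits of length N) ≥ (d^n)! requires N ≥ (n d^n log d)/(4 log(cdn)); hence some n-variable d-ary reversible function needs Ω(n d^n / log n) gates. -/
/-!
Taking logarithms gives `log (d^n)! ≤ 2N log(cdn)`. Pairing the factor `i + 1` with `m - i`
in `m! · m!` shows `m^m ≤ (m!)²`, i.e. `log m! ≥ (m log m)/2`, and for `m = d^n` this is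
`(n d^n log d)/2`.
-/

open Real

theorem Nat.pow_self_le_factorial_sq (m : ℕ) : m ^ m ≤ m.factorial ^ 2 := by
  have h_reflect : ∏ i ∈ Finset.range m, (m - i) = m.factorial := by
    rw [← Finset.prod_range_add_one_eq_factorial, ← Finset.prod_range_reflect (· + 1) m]
    refine Finset.prod_congr rfl fun i hi => ?_
    have := Finset.mem_range.mp hi
    omega
  calc m ^ m = ∏ _i ∈ Finset.range m, m := by simp
    _ ≤ ∏ i ∈ Finset.range m, (i + 1) * (m - i) := by
        refine Finset.prod_le_prod' fun i hi => ?_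
        have := Finset.mem_range.mp hi
        nlinarith [Nat.sub_add_cancel this.le]
    _ = m.factorial ^ 2 := by
        rw [Finset.prod_mul_distrib, Finset.prod_range_add_one_eq_factorial, h_reflect, sq]

theorem Real.mul_log_le_two_mul_log_factorial (m : ℕ) :
    m * log m ≤ 2 * log m.factorial := by
  have h : ((m : ℝ)) ^ m ≤ ((m.factorial : ℝ)) ^ 2 := by
    exact_mod_cast Nat.pow_self_le_factorial_sq m
  have := log_le_log (by exact_mod_cast Nat.pow_self_pos) h
  rwa [log_pow, log_pow, Nat.cast_ofNat] at this

theorem stmt_18_general (c d n N : ℕ)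
    (h : ((Nat.factorial (d ^ n) : ℕ) : ℝ) ≤ (((c * d * n : ℕ) : ℝ)) ^ (2 * N)) :
    ((n : ℝ) * (d : ℝ) ^ n * Real.log d) / (4 * Real.log ((c : ℝ) * d * n)) ≤ N := by
  have h_log : log (d ^ n).factorial ≤ 2 * N * log ((c : ℝ) * d * n) := by
    have := log_le_log (by exact_mod_cast (d ^ n).factorial_pos) h
    push_cast [log_pow] at this
    linarith
  have h_factorial := mul_log_le_two_mul_log_factorial (d ^ n)
  rw [Nat.cast_pow, log_pow] at h_factorial
  have h_denom : 0 ≤ 4 * log ((c : ℝ) * d * n) := by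
    simpa using mul_nonneg zero_le_four (log_natCast_nonneg (c * d * n))
  exact div_le_of_le_mul₀ h_denom (Nat.cast_nonneg N) (by linarith)

/-- Counting lower bound (Lemma 5): for `d ≥ 2`, `c ≥ 1`, `n ≥ 1`, if the number of
circuits of length `N` over the G-gate library on `cn` qudits — at most `(cdn)^(2N)` —
is at least the number `(d^n)!` of `n`-variable `d`-ary reversible functions, then
`N ≥ n·d^n·log d / (4·log(cdn))`. -/
theorem stmt_18 (c d n N : ℕ) (hc : 1 ≤ c) (hd : 2 ≤ d) (hn : 1 ≤ n)
    (h : ((Nat.factorial (d ^ n) : ℕ) : ℝ) ≤ (((c * d * n : ℕ) : ℝ)) ^ (2 * N)) :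
    ((n : ℝ) * (d : ℝ) ^ n * Real.log d) / (4 * Real.log ((c : ℝ) * d * n)) ≤ N :=
  stmt_18_general c d n N h
end
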